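/- arXiv:math/0603165 — 2 statements merged into one kernel-verified Lean document; each statement's English description precedes it below -/
import Mathlib

section
/- Let M be a Noetherian (t−1)-invertible t-unipotent Λ-module of unipotence index k. Then for every n ≥ 1 the derived Alexander modules satisfy A_n(M) ≅ A_{n+k}(M) as Λ-modules, and if n and k are coprime then A_n(M) = 0. -/
open Polynomial

/-- `Λ` is the ring `ℤ[t,t⁻¹]` of Laurent polynomials with integer coefficients. -/
abbrev Λ : Type := LaurentPolynomial ℤ

/-- `tL` is the element `t` of `Λ = ℤ[t,t⁻¹]`. -/
noncomputable def tL : Λ := LaurentPolynomial.T 1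

/-- The submodule `(t^n − 1)M` of a `Λ`-module `M`. -/
noncomputable def derivedSub (M : Type) [AddCommGroup M] [Module Λ M] (n : ℕ) :
    Submodule Λ M :=
  LinearMap.range ((tL ^ n - 1) • (LinearMap.id : M →ₗ[Λ] M))

/-- The `n`-th derived Alexander module `A_n(M) = M/(t^n − 1)M` of a `Λ`-module `M`. -/
noncomputable abbrev derivedAlexander (M : Type) [AddCommGroup M] [Module Λ M] (n : ℕ) :=
  M ⧸ derivedSub M n

/-! Write `A_n = M/(t^n − 1)M`. Since `t^{n+k} − 1 = t^n (t^k − 1) + (t^n − 1)` and `t^k − 1` kills `M`,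
the submodules `(t^{n+k} − 1)M` and `(t^n − 1)M` coincide. On `A_n` both `t^n` and `t^k` act trivially;
the exponents `m` with `t^m` acting trivially form a subgroup of `ℤ`, so for coprime `n, k` it contains `1`.
Then `t − 1` is zero on `A_n`, yet surjective there because it is surjective on `M`; hence `A_n = 0`. -/

open LaurentPolynomial

lemma tL_pow (n : ℕ) : tL ^ n = T (n : ℤ) := by
  rw [tL, T_pow, mul_one]

noncomputable def trivialExponents (N : Type) [AddCommGroup N] [Module Λ N] : AddSubgroup ℤ where
  carrier := {m | ∀ x : N, (T m : Λ) • x = x}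
  zero_mem' x := by rw [T_zero, one_smul]
  add_mem' {a b} ha hb x := by rw [T_add, mul_smul, hb, ha]
  neg_mem' {a} ha x := by
    calc (T (-a) : Λ) • x = (T (-a) : Λ) • (T a : Λ) • x := by rw [ha x]
      _ = x := by rw [smul_smul, ← T_add, neg_add_cancel, T_zero, one_smul]

section Module

variable {N : Type} [AddCommGroup N] [Module Λ N]

lemma natCast_mem_trivialExponents {n : ℕ} (h : ∀ x : N, tL ^ n • x = x) :
    (n : ℤ) ∈ trivialExponents N := fun x => by
  rw [← tL_pow, h]

lemma tL_smul_eq_self_of_coprime {n k : ℕ} (hcop : n.Coprime k)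
    (hn : ∀ x : N, tL ^ n • x = x) (hk : ∀ x : N, tL ^ k • x = x) (x : N) : tL • x = x := by
  obtain ⟨a, b, hab⟩ := Nat.isCoprime_iff_coprime.2 hcop
  have hone : (1 : ℤ) ∈ trivialExponents N := by
    rw [← hab]
    exact add_mem (zsmul_mem (natCast_mem_trivialExponents hn) a)
      (zsmul_mem (natCast_mem_trivialExponents hk) b)
  exact hone x

end Module

section Quotient

variable {M : Type} [AddCommGroup M] [Module Λ M]

lemma smul_quotient_eq_self {p : Submodule Λ M} {a : Λ} (ha : ∀ v : M, (a - 1) • v ∈ p)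
    (y : M ⧸ p) : a • y = y := by
  obtain ⟨v, rfl⟩ := Submodule.Quotient.mk_surjective p y
  rw [← sub_eq_zero, ← Submodule.Quotient.mk_smul, ← Submodule.Quotient.mk_sub,
    Submodule.Quotient.mk_eq_zero]
  simpa only [sub_smul, one_smul] using ha v

lemma quotient_eq_zero_of_tL_smul_eq_self {p : Submodule Λ M}
    (hM : Function.Surjective (fun v : M => (tL - 1) • v))
    (ht : ∀ y : M ⧸ p, tL • y = y) (y : M ⧸ p) : y = 0 := by
  obtain ⟨v, rfl⟩ := Submodule.Quotient.mk_surjective p y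
  obtain ⟨w, rfl⟩ := hM v
  rw [Submodule.Quotient.mk_smul, sub_smul, one_smul, ht, sub_self]

lemma tL_pow_smul_derivedAlexander (n : ℕ) (y : derivedAlexander M n) : tL ^ n • y = y :=
  smul_quotient_eq_self (fun v => LinearMap.mem_range_self _ v) y

lemma derivedSub_add_eq {k : ℕ} (hku : ∀ v : M, (tL ^ k - 1) • v = 0) (n : ℕ) :
    derivedSub M (n + k) = derivedSub M n := by
  have hsmul : (tL ^ (n + k) - 1) • (LinearMap.id : M →ₗ[Λ] M) = (tL ^ n - 1) • LinearMap.id := by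
    ext v
    have hsplit : tL ^ (n + k) - 1 = tL ^ n * (tL ^ k - 1) + (tL ^ n - 1) := by ring
    rw [LinearMap.smul_apply, LinearMap.smul_apply, LinearMap.id_apply, hsplit, add_smul, mul_smul,
      hku, smul_zero, zero_add]
  rw [derivedSub, derivedSub, hsmul]

end Quotient

theorem derived_alexander_periodic_general (M : Type) [AddCommGroup M] [Module Λ M]
    (hM : Function.Bijective (fun v : M => (tL - 1) • v))
    (k : ℕ)
    (hku : ∀ v : M, (tL ^ k - 1) • v = 0)
    (n : ℕ) :
    Nonempty (derivedAlexander M n ≃ₗ[Λ] derivedAlexander M (n + k)) ∧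
      (Nat.Coprime n k → ∀ x : derivedAlexander M n, x = 0) := by
  refine ⟨⟨Submodule.quotEquivOfEq _ _ (derivedSub_add_eq hku n).symm⟩, fun hcop => ?_⟩
  have htk (y : derivedAlexander M n) : tL ^ k • y = y :=
    smul_quotient_eq_self (fun v => (hku v).symm ▸ zero_mem _) y
  exact quotient_eq_zero_of_tL_smul_eq_self hM.2
    (tL_smul_eq_self_of_coprime hcop (tL_pow_smul_derivedAlexander n) htk)

/-- If `M` is a Noetherian (t−1)-invertible t-unipotent Λ-module of unipotence index `k`,
then `A_n(M) ≅ A_{n+k}(M)` for all `n ≥ 1`, and `A_n(M) = 0` whenever `n` is coprime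
to `k`. -/
theorem derived_alexander_periodic (M : Type) [AddCommGroup M] [Module Λ M]
    [IsNoetherian Λ M]
    (hM : Function.Bijective (fun v : M => (tL - 1) • v))
    (k : ℕ) (hk : 1 ≤ k)
    (hku : ∀ v : M, (tL ^ k - 1) • v = 0)
    (hmin : ∀ j : ℕ, 1 ≤ j → (∀ v : M, (tL ^ j - 1) • v = 0) → k ≤ j)
    (n : ℕ) (hn : 1 ≤ n) :
    Nonempty (derivedAlexander M n ≃ₗ[Λ] derivedAlexander M (n + k)) ∧
      (Nat.Coprime n k → ∀ x : derivedAlexander M n, x = 0) :=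
  derived_alexander_periodic_general M hM k hku n
end

section
/- An abelian group G is isomorphic (as an abelian group) to the second derived Alexander module A₂(M) = M/(t² − 1)M of some Noetherian (t−1)-invertible Λ-module M if and only if G is a finite group of odd order. -/
open Polynomial

/-- A bundled Noetherian `(t−1)`-invertible `Λ`-module. -/
structure NoethInvModule where
  carrier : Type
  [acg : AddCommGroup carrier]
  [mod : Module Λ carrier]
  noeth : IsNoetherian Λ carrier
  inv : Function.Bijective (fun v : carrier => (tL - 1) • v)

attribute [instance] NoethInvModule.acg NoethInvModule.mod

/-!
On `A₂(M) = M/(t² − 1)M` the map `t − 1` is still onto while `(t + 1)(t − 1) = t² − 1` acts as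
zero, so `t` acts as `−1` and the `Λ`-action factors through evaluation at `t = −1`. Hence
`A₂(M)` is a finitely generated abelian group on which `t − 1 = −2` is onto. By Nakayama's lemma
it is annihilated by an odd integer, so it is finite, and then multiplication by `2`, being onto,
is injective, so its order is odd. Conversely a finite group of odd order on which `t` acts as
`−1` is Noetherian, `t − 1 = −2` is invertible on it and `t² − 1` kills it, so it is its own `A₂`.
-/

open LaurentPolynomial Function

lemma smul_surjective_quotient {R : Type*} [Ring R] {N : Type*} [AddCommGroup N] [Module R N]
    {c : R} (h : Surjective fun m : N => c • m) (P : Submodule R N) :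
    Surjective fun q : N ⧸ P => c • q := by
  intro q
  obtain ⟨m, rfl⟩ := Submodule.Quotient.mk_surjective _ q
  obtain ⟨m', rfl⟩ := h m
  exact ⟨Submodule.Quotient.mk m', rfl⟩

noncomputable def evalNegOne : Λ →+* ℤ := eval₂ (RingHom.id ℤ) (-1)

@[simp]
lemma evalNegOne_tL : evalNegOne tL = -1 := by
  simp [evalNegOne, tL]

lemma ringHom_ext_of_map_tL {S : Type*} [Semiring S] {f g : Λ →+* S} (h : f tL = g tL) :
    f = g :=
  AddMonoidAlgebra.ringHom_ext' (RingHom.ext_int _ _) (MonoidHom.ext_mint h)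

section TActsAsNegOne

variable {Q : Type*} [AddCommGroup Q] [Module Λ Q]

lemma smul_eq_evalNegOne_smul (ht : ∀ q : Q, tL • q = -q) (c : Λ) (q : Q) :
    c • q = evalNegOne c • q := by
  have hend : Module.toAddMonoidEnd Λ Q = (Module.toAddMonoidEnd ℤ Q).comp evalNegOne :=
    ringHom_ext_of_map_tL <| by
      rw [RingHom.comp_apply, evalNegOne_tL]
      exact AddMonoidHom.ext fun q => (ht q).trans (neg_one_smul ℤ q).symm
  exact DFunLike.congr_fun (DFunLike.congr_fun hend c) q

lemma Module.Finite.int_of_tL_smul_eq_neg [Module.Finite Λ Q] (ht : ∀ q : Q, tL • q = -q) :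
    Module.Finite ℤ Q :=
  Module.Finite.of_surjective (σ := evalNegOne)
    { toFun := id, map_add' := fun _ _ => rfl, map_smul' := smul_eq_evalNegOne_smul ht }
    surjective_id

lemma tL_sub_one_smul_eq_neg_two_nsmul (ht : ∀ q : Q, tL • q = -q) (q : Q) :
    (tL - 1) • q = -(2 • q) := by
  rw [sub_smul, one_smul, ht, two_nsmul, neg_add]
  abel

lemma tL_sq_sub_one_smul_eq_zero (ht : ∀ q : Q, tL • q = -q) (q : Q) :
    (tL ^ 2 - 1) • q = 0 := by
  rw [sub_smul, one_smul, pow_two, mul_smul, ht, ht, neg_neg, sub_self]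

lemma tL_sub_one_smul_bijective_of_odd_card (ht : ∀ q : Q, tL • q = -q)
    (hodd : Odd (Nat.card Q)) :
    Bijective fun q : Q => (tL - 1) • q := by
  simp only [tL_sub_one_smul_eq_neg_two_nsmul ht]
  exact neg_bijective.comp (Nat.coprime_two_right.mpr hodd).nsmul_right_bijective

end TActsAsNegOne

section DerivedSub

variable {M : Type} [AddCommGroup M] [Module Λ M]

lemma derivedSub_eq_bot_iff {n : ℕ} : derivedSub M n = ⊥ ↔ ∀ m : M, (tL ^ n - 1) • m = 0 := by
  simp [derivedSub, LinearMap.range_eq_bot, LinearMap.ext_iff]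

lemma tL_pow_sub_one_smul_quotient_derivedSub (n : ℕ) (q : M ⧸ derivedSub M n) :
    (tL ^ n - 1) • q = 0 := by
  obtain ⟨m, rfl⟩ := Submodule.Quotient.mk_surjective _ q
  rw [← Submodule.Quotient.mk_smul, Submodule.Quotient.mk_eq_zero]
  exact ⟨m, rfl⟩

lemma tL_smul_quotient_derivedSub_two (h : Surjective fun m : M => (tL - 1) • m)
    (q : M ⧸ derivedSub M 2) : tL • q = -q := by
  obtain ⟨p, rfl⟩ := smul_surjective_quotient h _ q
  have h0 : (tL + 1) • (tL - 1) • p = 0 := by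
    rw [← mul_smul, ← mul_self_sub_one, ← sq]
    exact tL_pow_sub_one_smul_quotient_derivedSub 2 p
  rw [add_smul, one_smul] at h0
  exact eq_neg_of_add_eq_zero_left h0

end DerivedSub

lemma finite_of_nsmul_surjective {Q : Type*} [AddCommGroup Q] [Module.Finite ℤ Q] {n : ℕ}
    (hn : n ≠ 1) (h : Surjective fun q : Q => n • q) : Finite Q := by
  have hle : (⊤ : Submodule ℤ Q) ≤ Ideal.span {(n : ℤ)} • ⊤ := by
    rintro q -
    obtain ⟨p, rfl⟩ := h q
    change n • p ∈ _
    rw [← natCast_zsmul]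
    exact Submodule.smul_mem_smul (Ideal.mem_span_singleton_self _) trivial
  obtain ⟨r, hr1, hr0⟩ := Submodule.exists_sub_one_mem_and_smul_eq_zero_of_fg_of_le_smul
    _ ⊤ (Module.finite_def.mp inferInstance) hle
  have hr : r ≠ 0 := by
    rintro rfl
    have h1 : (n : ℤ) ∣ (1 : ℕ) := by simpa using Ideal.mem_span_singleton.mp hr1
    exact hn (Nat.dvd_one.mp (Int.natCast_dvd_natCast.mp h1))
  exact Module.finite_of_fg_torsion Q fun q =>
    ⟨⟨r, mem_nonZeroDivisors_of_ne_zero hr⟩, hr0 q trivial⟩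

lemma coprime_card_of_nsmul_injective {Q : Type*} [AddGroup Q] [Finite Q] {n : ℕ}
    (h : Injective fun q : Q => n • q) : (Nat.card Q).Coprime n := by
  refine Nat.coprime_of_dvd fun p hp hpQ hpn => ?_
  have := Fact.mk hp
  obtain ⟨x, hx⟩ := exists_prime_addOrderOf_dvd_card' p hpQ
  have hx0 : x = 0 := h (by simpa [← hx, addOrderOf_dvd_iff_nsmul_eq_zero] using hpn)
  simp [hx0, hp.ne_one.symm] at hx

/-- An abelian group `G` is isomorphic to the second derived Alexander module
`A₂(M) = M/(t² − 1)M` of some Noetherian (t−1)-invertible Λ-module `M` iff `G` is a finite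
group of odd order. -/
theorem second_derived_alexander_realization (G : Type) [AddCommGroup G] :
    (∃ M : NoethInvModule, Nonempty (G ≃+ (M.carrier ⧸ derivedSub M.carrier 2))) ↔
      (Finite G ∧ Odd (Nat.card G)) := by
  constructor
  · rintro ⟨M, ⟨e⟩⟩
    have := M.noeth
    have ht := tL_smul_quotient_derivedSub_two M.inv.2
    have := Module.Finite.int_of_tL_smul_eq_neg ht
    have h2 : Surjective fun q : M.carrier ⧸ derivedSub M.carrier 2 => 2 • q := by
      have hs := smul_surjective_quotient M.inv.2 (derivedSub M.carrier 2)
      simp only [tL_sub_one_smul_eq_neg_two_nsmul ht] at hs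
      exact (Surjective.of_comp_iff' neg_bijective _).mp hs
    have := finite_of_nsmul_surjective (by norm_num) h2
    have hcop := coprime_card_of_nsmul_injective (Finite.injective_iff_surjective.mpr h2)
    exact ⟨.of_equiv _ e.symm.toEquiv, Nat.card_congr e.toEquiv ▸ Nat.coprime_two_right.mp hcop⟩
  · rintro ⟨hfin, hodd⟩
    let : Module Λ G := Module.compHom G evalNegOne
    have ht : ∀ g : G, tL • g = -g := fun g => by
      change evalNegOne tL • g = -g
      rw [evalNegOne_tL, neg_one_smul]
    have hbot := derivedSub_eq_bot_iff.mpr (tL_sq_sub_one_smul_eq_zero ht)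
    exact ⟨⟨G, isNoetherian_of_finite Λ G, tL_sub_one_smul_bijective_of_odd_card ht hodd⟩,
      ⟨(Submodule.quotEquivOfEqBot _ hbot).symm.toAddEquiv⟩⟩
end
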